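/- Let q, r : ℝ³ → ℂ be smooth functions of (x,y,t) satisfying the second and third AKNS flows. Then for every λ ∈ ℂ, the 2×2 matrix Z^[3] := V_t − W_y + V W − W V vanishes identically on ℝ³, where V = V(λ) and W = W(λ) are the matrices built from q, r; i.e., the compatibility condition V_t − W_y + [V, W] = 0 holds for all λ ∈ ℂ. -/

import Mathlib

open Complex Matrix

/-- Partial derivative in the first (`x`) variable. -/
noncomputable def pdx {E : Type*} [NormedAddCommGroup E] [NormedSpace ℝ E]
    (f : ℝ × ℝ × ℝ → E) (p : ℝ × ℝ × ℝ) : E :=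
  deriv (fun s => f (s, p.2.1, p.2.2)) p.1

/-- Partial derivative in the second (`y`) variable. -/
noncomputable def pdy {E : Type*} [NormedAddCommGroup E] [NormedSpace ℝ E]
    (f : ℝ × ℝ × ℝ → E) (p : ℝ × ℝ × ℝ) : E :=
  deriv (fun s => f (p.1, s, p.2.2)) p.2.1

/-- Partial derivative in the third (`t`) variable. -/
noncomputable def pdt {E : Type*} [NormedAddCommGroup E] [NormedSpace ℝ E]
    (f : ℝ × ℝ × ℝ → E) (p : ℝ × ℝ × ℝ) : E :=
  deriv (fun s => f (p.1, p.2.1, s)) p.2.2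

/-- Entrywise partial `x`-derivative of a matrix-valued function. -/
noncomputable def mdx (F : ℝ × ℝ × ℝ → Matrix (Fin 2) (Fin 2) ℂ) (p : ℝ × ℝ × ℝ) :
    Matrix (Fin 2) (Fin 2) ℂ :=
  Matrix.of fun i j => pdx (fun p' => F p' i j) p

/-- Entrywise partial `y`-derivative of a matrix-valued function. -/
noncomputable def mdy (F : ℝ × ℝ × ℝ → Matrix (Fin 2) (Fin 2) ℂ) (p : ℝ × ℝ × ℝ) :
    Matrix (Fin 2) (Fin 2) ℂ :=
  Matrix.of fun i j => pdy (fun p' => F p' i j) p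

/-- Entrywise partial `t`-derivative of a matrix-valued function. -/
noncomputable def mdt (F : ℝ × ℝ × ℝ → Matrix (Fin 2) (Fin 2) ℂ) (p : ℝ × ℝ × ℝ) :
    Matrix (Fin 2) (Fin 2) ℂ :=
  Matrix.of fun i j => pdt (fun p' => F p' i j) p

/-- The Pauli matrix `σ₃ = diag(1, −1)`. -/
def sigma3 : Matrix (Fin 2) (Fin 2) ℂ := !![1, 0; 0, -1]

/-- The potential matrix `Q = [[0, r],[q, 0]]`. -/
def Qmat (q r : ℝ × ℝ × ℝ → ℂ) (p : ℝ × ℝ × ℝ) : Matrix (Fin 2) (Fin 2) ℂ :=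
  !![0, r p; q p, 0]

/-- `V(λ) = 2(iλ²σ₃ + iλQ − (i/2)σ₃Q² + (1/2)σ₃Q_x)`. -/
noncomputable def Vmat (q r : ℝ × ℝ × ℝ → ℂ) (lam : ℂ) (p : ℝ × ℝ × ℝ) :
    Matrix (Fin 2) (Fin 2) ℂ :=
  (2 : ℂ) • ((I * lam ^ 2) • sigma3 + (I * lam) • Qmat q r p
    - (I / 2) • (sigma3 * (Qmat q r p) ^ 2)
    + (1 / 2 : ℂ) • (sigma3 * mdx (Qmat q r) p))

/-- `W(λ) = −4iλ³σ₃ − 4iλ²Q + 2λ(iσ₃Q² − σ₃Q_x) + iQ_{xx} + 2iQ³ + Q_x Q − Q Q_x`. -/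
noncomputable def Wmat (q r : ℝ × ℝ × ℝ → ℂ) (lam : ℂ) (p : ℝ × ℝ × ℝ) :
    Matrix (Fin 2) (Fin 2) ℂ :=
  (-(4 : ℂ) * I * lam ^ 3) • sigma3 + (-(4 : ℂ) * I * lam ^ 2) • Qmat q r p
    + (2 * lam) • (I • (sigma3 * (Qmat q r p) ^ 2) - sigma3 * mdx (Qmat q r) p)
    + I • mdx (fun p' => mdx (Qmat q r) p') p
    + (2 * I) • (Qmat q r p) ^ 3
    + mdx (Qmat q r) p * Qmat q r p - Qmat q r p * mdx (Qmat q r) p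

section AuxDeriv
variable {f : ℝ × ℝ × ℝ → ℂ}

lemma hdX (hf : Differentiable ℝ f) (p : ℝ × ℝ × ℝ) :
    HasDerivAt (fun s => f (s, p.2.1, p.2.2)) (pdx f p) p.1 := by
  have : DifferentiableAt ℝ (fun s => f (s, p.2.1, p.2.2)) p.1 :=
    (hf (p.1, p.2.1, p.2.2)).comp p.1
      (DifferentiableAt.prodMk differentiableAt_id (DifferentiableAt.prodMk (differentiableAt_const _) (differentiableAt_const _)))
  exact this.hasDerivAt

lemma hdY (hf : Differentiable ℝ f) (p : ℝ × ℝ × ℝ) :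
    HasDerivAt (fun s => f (p.1, s, p.2.2)) (pdy f p) p.2.1 := by
  have : DifferentiableAt ℝ (fun s => f (p.1, s, p.2.2)) p.2.1 :=
    (hf (p.1, p.2.1, p.2.2)).comp p.2.1
      (DifferentiableAt.prodMk (differentiableAt_const _) (DifferentiableAt.prodMk differentiableAt_id (differentiableAt_const _)))
  exact this.hasDerivAt

lemma hdT (hf : Differentiable ℝ f) (p : ℝ × ℝ × ℝ) :
    HasDerivAt (fun s => f (p.1, p.2.1, s)) (pdt f p) p.2.2 := by
  have : DifferentiableAt ℝ (fun s => f (p.1, p.2.1, s)) p.2.2 :=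
    (hf (p.1, p.2.1, p.2.2)).comp p.2.2
      (DifferentiableAt.prodMk (differentiableAt_const _) (DifferentiableAt.prodMk (differentiableAt_const _) differentiableAt_id))
  exact this.hasDerivAt

lemma pdx_eqd {p : ℝ × ℝ × ℝ} {v : ℂ}
    (h : HasDerivAt (fun s => f (s, p.2.1, p.2.2)) v p.1) : pdx f p = v := h.deriv
lemma pdy_eqd {p : ℝ × ℝ × ℝ} {v : ℂ}
    (h : HasDerivAt (fun s => f (p.1, s, p.2.2)) v p.2.1) : pdy f p = v := h.deriv
lemma pdt_eqd {p : ℝ × ℝ × ℝ} {v : ℂ}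
    (h : HasDerivAt (fun s => f (p.1, p.2.1, s)) v p.2.2) : pdt f p = v := h.deriv

lemma pdx_eq_fderiv (hf : Differentiable ℝ f) (p : ℝ × ℝ × ℝ) :
    pdx f p = fderiv ℝ f p (1, 0, 0) := by
  have hline : HasDerivAt (fun s : ℝ => ((s, p.2.1, p.2.2) : ℝ × ℝ × ℝ))
      ((1 : ℝ), (0 : ℝ), (0 : ℝ)) p.1 :=
    HasDerivAt.prodMk (hasDerivAt_id p.1) (HasDerivAt.prodMk (hasDerivAt_const _ _) (hasDerivAt_const _ _))
  exact ((hf p).hasFDerivAt.comp_hasDerivAt p.1 hline).deriv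

lemma pdy_eq_fderiv (hf : Differentiable ℝ f) (p : ℝ × ℝ × ℝ) :
    pdy f p = fderiv ℝ f p (0, 1, 0) := by
  have hline : HasDerivAt (fun s : ℝ => ((p.1, s, p.2.2) : ℝ × ℝ × ℝ))
      ((0 : ℝ), (1 : ℝ), (0 : ℝ)) p.2.1 :=
    HasDerivAt.prodMk (hasDerivAt_const _ _) (HasDerivAt.prodMk (hasDerivAt_id p.2.1) (hasDerivAt_const _ _))
  exact ((hf p).hasFDerivAt.comp_hasDerivAt p.2.1 hline).deriv

lemma pdt_eq_fderiv (hf : Differentiable ℝ f) (p : ℝ × ℝ × ℝ) :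
    pdt f p = fderiv ℝ f p (0, 0, 1) := by
  have hline : HasDerivAt (fun s : ℝ => ((p.1, p.2.1, s) : ℝ × ℝ × ℝ))
      ((0 : ℝ), (0 : ℝ), (1 : ℝ)) p.2.2 :=
    HasDerivAt.prodMk (hasDerivAt_const _ _) (HasDerivAt.prodMk (hasDerivAt_const _ _) (hasDerivAt_id p.2.2))
  exact ((hf p).hasFDerivAt.comp_hasDerivAt p.2.2 hline).deriv

lemma contDiff_pdx (hf : ContDiff ℝ (⊤ : ℕ∞) f) : ContDiff ℝ (⊤ : ℕ∞) (pdx f) := by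
  have : pdx f = fun p => fderiv ℝ f p (1, 0, 0) :=
    funext fun p => pdx_eq_fderiv (hf.differentiable (by simp)) p
  rw [this]
  exact (hf.fderiv_right (by simp)).clm_apply contDiff_const

lemma smooth_fderiv_apply (hf : ContDiff ℝ (⊤ : ℕ∞) f) (v : ℝ × ℝ × ℝ) :
    ContDiff ℝ (⊤ : ℕ∞) (fun p' => fderiv ℝ f p' v) :=
  (hf.fderiv_right (by simp)).clm_apply contDiff_const

lemma clairaut_core (hf : ContDiff ℝ (⊤ : ℕ∞) f) (p : ℝ × ℝ × ℝ) (v w : ℝ × ℝ × ℝ) :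
    fderiv ℝ (fun p' => fderiv ℝ f p' v) p w = fderiv ℝ (fun p' => fderiv ℝ f p' w) p v := by
  have hdf : Differentiable ℝ (fderiv ℝ f) := (hf.fderiv_right (m := 1) (WithTop.coe_le_coe.mpr le_top)).differentiable (by simp)
  rw [fderiv_clm_apply (hdf p) (differentiableAt_const v),
      fderiv_clm_apply (hdf p) (differentiableAt_const w)]
  simp only [fderiv_fun_const, fderiv_fun_const, ContinuousLinearMap.zero_apply, Pi.zero_apply, ContinuousLinearMap.comp_zero, zero_add,
    ContinuousLinearMap.add_apply, ContinuousLinearMap.flip_apply]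
  exact second_derivative_symmetric (fun y => ((hf.differentiable (by simp)) y).hasFDerivAt)
    (hdf p).hasFDerivAt w v

lemma pdt_pdx_comm (hf : ContDiff ℝ (⊤ : ℕ∞) f) (p : ℝ × ℝ × ℝ) :
    pdt (pdx f) p = pdx (pdt f) p := by
  have hdiff := hf.differentiable (by simp)
  have h1 : pdx f = fun p' => fderiv ℝ f p' (1, 0, 0) := funext fun p' => pdx_eq_fderiv hdiff p'
  have h2 : pdt f = fun p' => fderiv ℝ f p' (0, 0, 1) := funext fun p' => pdt_eq_fderiv hdiff p'
  rw [h1, h2,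
    pdt_eq_fderiv ((smooth_fderiv_apply hf _).differentiable (by simp)),
    pdx_eq_fderiv ((smooth_fderiv_apply hf _).differentiable (by simp))]
  exact clairaut_core hf p _ _

lemma pdy_pdx_comm (hf : ContDiff ℝ (⊤ : ℕ∞) f) (p : ℝ × ℝ × ℝ) :
    pdy (pdx f) p = pdx (pdy f) p := by
  have hdiff := hf.differentiable (by simp)
  have h1 : pdx f = fun p' => fderiv ℝ f p' (1, 0, 0) := funext fun p' => pdx_eq_fderiv hdiff p'
  have h2 : pdy f = fun p' => fderiv ℝ f p' (0, 1, 0) := funext fun p' => pdy_eq_fderiv hdiff p'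
  rw [h1, h2,
    pdy_eq_fderiv ((smooth_fderiv_apply hf _).differentiable (by simp)),
    pdx_eq_fderiv ((smooth_fderiv_apply hf _).differentiable (by simp))]
  exact clairaut_core hf p _ _

end AuxDeriv

section AuxMatrix

lemma mdt_entries (a b c d : ℝ × ℝ × ℝ → ℂ) (p : ℝ × ℝ × ℝ) :
    mdt (fun p' => !![a p', b p'; c p', d p']) p = !![pdt a p, pdt b p; pdt c p, pdt d p] := by
  ext i j
  fin_cases i <;> fin_cases j <;> simp [mdt]

lemma mdy_entries (a b c d : ℝ × ℝ × ℝ → ℂ) (p : ℝ × ℝ × ℝ) :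
    mdy (fun p' => !![a p', b p'; c p', d p']) p = !![pdy a p, pdy b p; pdy c p, pdy d p] := by
  ext i j
  fin_cases i <;> fin_cases j <;> simp [mdy]

lemma mdx_Q (q r : ℝ × ℝ × ℝ → ℂ) (p : ℝ × ℝ × ℝ) :
    mdx (Qmat q r) p = !![0, pdx r p; pdx q p, 0] := by
  ext i j
  fin_cases i <;> fin_cases j <;> simp [mdx, Qmat, pdx]

lemma mdx_mdx_Q (q r : ℝ × ℝ × ℝ → ℂ) (p : ℝ × ℝ × ℝ) :
    mdx (fun p' => mdx (Qmat q r) p') p = !![0, pdx (pdx r) p; pdx (pdx q) p, 0] := by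
  have hfun : (fun p' => mdx (Qmat q r) p') = fun p' => !![(0:ℂ), pdx r p'; pdx q p', 0] :=
    funext (mdx_Q q r)
  rw [hfun]
  ext i j
  fin_cases i <;> fin_cases j <;> simp [mdx, pdx]

lemma Vmat_entries (q r : ℝ × ℝ × ℝ → ℂ) (lam : ℂ) (p : ℝ × ℝ × ℝ) :
    Vmat q r lam p = !![2*I*lam^2 - I*(q p*r p), 2*I*lam*r p + pdx r p;
                        2*I*lam*q p - pdx q p, -(2*I*lam^2) + I*(q p*r p)] := by
  have h := mdx_Q q r p
  ext i j
  fin_cases i <;> fin_cases j <;>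
    simp [Vmat, Qmat, sigma3, h, Matrix.mul_apply, Fin.sum_univ_two, pow_two] <;> ring

lemma Wmat_entries (q r : ℝ × ℝ × ℝ → ℂ) (lam : ℂ) (p : ℝ × ℝ × ℝ) :
    Wmat q r lam p =
      !![-(4*I*lam^3) + 2*I*lam*(q p*r p) + q p*pdx r p - pdx q p*r p,
         -(4*I*lam^2)*r p - 2*lam*pdx r p + I*pdx (pdx r) p + 2*I*(q p*r p*r p);
         -(4*I*lam^2)*q p + 2*lam*pdx q p + I*pdx (pdx q) p + 2*I*(q p*q p*r p),
         4*I*lam^3 - 2*I*lam*(q p*r p) + pdx q p*r p - q p*pdx r p] := by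
  have h1 := mdx_Q q r p
  have h2 := mdx_mdx_Q q r p
  ext i j
  fin_cases i <;> fin_cases j <;>
    simp [Wmat, Qmat, sigma3, h1, h2, Matrix.mul_apply, Fin.sum_univ_two, pow_succ, pow_zero] <;>
    ring

end AuxMatrix

set_option maxHeartbeats 2000000 in
/-- if smooth `q, r` satisfy the second and third AKNS flows, then the
compatibility condition `V_t − W_y + [V, W] = 0` holds for all `λ ∈ ℂ`. -/
theorem compatibility_VW_of_akns_flows (q r : ℝ × ℝ × ℝ → ℂ)
    (hq : ContDiff ℝ (⊤ : ℕ∞) q) (hr : ContDiff ℝ (⊤ : ℕ∞) r)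
    (h2q : ∀ p, I * pdy q p = -pdx (pdx q) p - 2 * (q p) ^ 2 * r p)
    (h2r : ∀ p, I * pdy r p = pdx (pdx r) p + 2 * q p * (r p) ^ 2)
    (h3q : ∀ p, pdt q p = pdx (pdx (pdx q)) p + 6 * pdx q p * q p * r p)
    (h3r : ∀ p, pdt r p = pdx (pdx (pdx r)) p + 6 * q p * r p * pdx r p) :
    ∀ (lam : ℂ) (p : ℝ × ℝ × ℝ),
      mdt (Vmat q r lam) p - mdy (Wmat q r lam) p
        + (Vmat q r lam p * Wmat q r lam p - Wmat q r lam p * Vmat q r lam p) = 0 := by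
  intro lam p
  -- differentiability of iterated x-derivatives
  have cq1 := contDiff_pdx hq
  have cq2 := contDiff_pdx cq1
  have cq3 := contDiff_pdx cq2
  have cr1 := contDiff_pdx hr
  have cr2 := contDiff_pdx cr1
  have cr3 := contDiff_pdx cr2
  have dq0 : Differentiable ℝ q := hq.differentiable (by simp)
  have dq1 : Differentiable ℝ (pdx q) := cq1.differentiable (by simp)
  have dq2 : Differentiable ℝ (pdx (pdx q)) := cq2.differentiable (by simp)
  have dq3 : Differentiable ℝ (pdx (pdx (pdx q))) := cq3.differentiable (by simp)
  have dr0 : Differentiable ℝ r := hr.differentiable (by simp)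
  have dr1 : Differentiable ℝ (pdx r) := cr1.differentiable (by simp)
  have dr2 : Differentiable ℝ (pdx (pdx r)) := cr2.differentiable (by simp)
  have dr3 : Differentiable ℝ (pdx (pdx (pdx r))) := cr3.differentiable (by simp)
  -- y-flow in solved form
  have Eyq : ∀ p', pdy q p' = I * (pdx (pdx q) p' + 2 * (q p' * q p' * r p')) := by
    intro p'
    linear_combination (-I) * h2q p' + pdy q p' * Complex.I_sq
  have Eyr : ∀ p', pdy r p' = -(I * (pdx (pdx r) p' + 2 * (q p' * r p' * r p'))) := by
    intro p'
    linear_combination (-I) * h2r p' + pdy r p' * Complex.I_sq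
  -- y-derivatives of x-derivatives
  have Eyq1 : ∀ p', pdy (pdx q) p' =
      I * (pdx (pdx (pdx q)) p' + 4 * (q p' * pdx q p' * r p') + 2 * (q p' * q p' * pdx r p')) := by
    intro p'
    rw [pdy_pdx_comm hq p']
    have hfun : pdy q = fun p'' => I * (pdx (pdx q) p'' + 2 * (q p'' * q p'' * r p'')) :=
      funext Eyq
    rw [hfun]
    have h : pdx (fun p'' => I * (pdx (pdx q) p'' + 2 * (q p'' * q p'' * r p''))) p' = _ :=
      pdx_eqd (((hdX dq2 p').add
        ((((hdX dq0 p').mul (hdX dq0 p')).mul (hdX dr0 p')).const_mul 2)).const_mul I)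
    rw [h]; simp only [Pi.mul_apply, Prod.mk.eta]; try ring
  have Eyr1 : ∀ p', pdy (pdx r) p' =
      -(I * (pdx (pdx (pdx r)) p' + 2 * (pdx q p' * r p' * r p')
        + 4 * (q p' * r p' * pdx r p'))) := by
    intro p'
    rw [pdy_pdx_comm hr p']
    have hfun : pdy r = fun p'' => -(I * (pdx (pdx r) p'' + 2 * (q p'' * r p'' * r p''))) :=
      funext Eyr
    rw [hfun]
    have h : pdx (fun p'' => -(I * (pdx (pdx r) p'' + 2 * (q p'' * r p'' * r p'')))) p' = _ :=
      pdx_eqd ((((hdX dr2 p').add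
        ((((hdX dq0 p').mul (hdX dr0 p')).mul (hdX dr0 p')).const_mul 2)).const_mul I).neg)
    rw [h]; simp only [Pi.mul_apply, Prod.mk.eta]; try ring
  have Eyq2 : pdy (pdx (pdx q)) p =
      I * (pdx (pdx (pdx (pdx q))) p + 4 * (pdx q p * pdx q p * r p)
        + 4 * (q p * pdx (pdx q) p * r p)
        + 8 * (q p * pdx q p * pdx r p) + 2 * (q p * q p * pdx (pdx r) p)) := by
    rw [pdy_pdx_comm cq1 p]
    have hfun : pdy (pdx q) = fun p'' =>
        I * (pdx (pdx (pdx q)) p'' + 4 * (q p'' * pdx q p'' * r p'')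
          + 2 * (q p'' * q p'' * pdx r p'')) :=
      funext Eyq1
    rw [hfun]
    have h : pdx (fun p'' =>
        I * (pdx (pdx (pdx q)) p'' + 4 * (q p'' * pdx q p'' * r p'')
          + 2 * (q p'' * q p'' * pdx r p''))) p = _ :=
      pdx_eqd ((((hdX dq3 p).add
          ((((hdX dq0 p).mul (hdX dq1 p)).mul (hdX dr0 p)).const_mul 4)).add
          ((((hdX dq0 p).mul (hdX dq0 p)).mul (hdX dr1 p)).const_mul 2)).const_mul I)
    rw [h]; simp only [Pi.mul_apply, Prod.mk.eta]; try ring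
  have Eyr2 : pdy (pdx (pdx r)) p =
      -(I * (pdx (pdx (pdx (pdx r))) p + 2 * (pdx (pdx q) p * r p * r p)
        + 8 * (pdx q p * r p * pdx r p)
        + 4 * (q p * pdx r p * pdx r p) + 4 * (q p * r p * pdx (pdx r) p))) := by
    rw [pdy_pdx_comm cr1 p]
    have hfun : pdy (pdx r) = fun p'' =>
        -(I * (pdx (pdx (pdx r)) p'' + 2 * (pdx q p'' * r p'' * r p'')
          + 4 * (q p'' * r p'' * pdx r p''))) :=
      funext Eyr1
    rw [hfun]
    have h : pdx (fun p'' =>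
        -(I * (pdx (pdx (pdx r)) p'' + 2 * (pdx q p'' * r p'' * r p'')
          + 4 * (q p'' * r p'' * pdx r p'')))) p = _ :=
      pdx_eqd (((((hdX dr3 p).add
          ((((hdX dq1 p).mul (hdX dr0 p)).mul (hdX dr0 p)).const_mul 2)).add
          ((((hdX dq0 p).mul (hdX dr0 p)).mul (hdX dr1 p)).const_mul 4)).const_mul I).neg)
    rw [h]; simp only [Pi.mul_apply, Prod.mk.eta]; try ring
  -- t-derivatives of x-derivatives
  have Etq1 : pdt (pdx q) p =
      pdx (pdx (pdx (pdx q))) p + 6 * pdx (pdx q) p * q p * r p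
        + 6 * pdx q p * pdx q p * r p + 6 * pdx q p * q p * pdx r p := by
    rw [pdt_pdx_comm hq p]
    have hfun : pdt q = fun p'' => pdx (pdx (pdx q)) p'' + 6 * pdx q p'' * q p'' * r p'' :=
      funext h3q
    rw [hfun]
    have h : pdx (fun p'' => pdx (pdx (pdx q)) p'' + 6 * pdx q p'' * q p'' * r p'') p = _ :=
      pdx_eqd ((hdX dq3 p).add ((((hdX dq1 p).const_mul 6).mul (hdX dq0 p)).mul (hdX dr0 p)))
    rw [h]; simp only [Pi.mul_apply, Prod.mk.eta]; try ring
  have Etr1 : pdt (pdx r) p =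
      pdx (pdx (pdx (pdx r))) p + 6 * pdx q p * r p * pdx r p
        + 6 * q p * pdx r p * pdx r p + 6 * q p * r p * pdx (pdx r) p := by
    rw [pdt_pdx_comm hr p]
    have hfun : pdt r = fun p'' => pdx (pdx (pdx r)) p'' + 6 * q p'' * r p'' * pdx r p'' :=
      funext h3r
    rw [hfun]
    have h : pdx (fun p'' => pdx (pdx (pdx r)) p'' + 6 * q p'' * r p'' * pdx r p'') p = _ :=
      pdx_eqd ((hdX dr3 p).add ((((hdX dq0 p).const_mul 6).mul (hdX dr0 p)).mul (hdX dr1 p)))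
    rw [h]; simp only [Pi.mul_apply, Prod.mk.eta]; try ring
  -- explicit forms of V, W at p and of their entry functions
  have hVfun : Vmat q r lam = fun p' =>
      !![2*I*lam^2 - I*(q p'*r p'), 2*I*lam*r p' + pdx r p';
         2*I*lam*q p' - pdx q p', -(2*I*lam^2) + I*(q p'*r p')] :=
    funext (Vmat_entries q r lam)
  have hWfun : Wmat q r lam = fun p' =>
      !![-(4*I*lam^3) + 2*I*lam*(q p'*r p') + q p'*pdx r p' - pdx q p'*r p',
         -(4*I*lam^2)*r p' - 2*lam*pdx r p' + I*pdx (pdx r) p' + 2*I*(q p'*r p'*r p');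
         -(4*I*lam^2)*q p' + 2*lam*pdx q p' + I*pdx (pdx q) p' + 2*I*(q p'*q p'*r p'),
         4*I*lam^3 - 2*I*lam*(q p'*r p') + pdx q p'*r p' - q p'*pdx r p'] :=
    funext (Wmat_entries q r lam)
  -- entrywise t-derivative of V
  have hVt : mdt (Vmat q r lam) p =
      !![pdt (fun p' => 2*I*lam^2 - I*(q p'*r p')) p,
         pdt (fun p' => 2*I*lam*r p' + pdx r p') p;
         pdt (fun p' => 2*I*lam*q p' - pdx q p') p,
         pdt (fun p' => -(2*I*lam^2) + I*(q p'*r p')) p] := by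
    rw [hVfun]; exact mdt_entries _ _ _ _ p
  have hVt00 : pdt (fun p' => 2*I*lam^2 - I*(q p'*r p')) p
      = -(I * (pdt q p * r p + q p * pdt r p)) := by
    have h : pdt (fun p' => 2*I*lam^2 - I*(q p'*r p')) p = _ :=
      pdt_eqd ((hasDerivAt_const _ _).sub (((hdT dq0 p).mul (hdT dr0 p)).const_mul I))
    rw [h]; try ring
  have hVt01 : pdt (fun p' => 2*I*lam*r p' + pdx r p') p
      = 2*I*lam*pdt r p + pdt (pdx r) p := by
    have h : pdt (fun p' => 2*I*lam*r p' + pdx r p') p = _ :=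
      pdt_eqd (((hdT dr0 p).const_mul (2*I*lam)).add (hdT dr1 p))
    rw [h]; try ring
  have hVt10 : pdt (fun p' => 2*I*lam*q p' - pdx q p') p
      = 2*I*lam*pdt q p - pdt (pdx q) p := by
    have h : pdt (fun p' => 2*I*lam*q p' - pdx q p') p = _ :=
      pdt_eqd (((hdT dq0 p).const_mul (2*I*lam)).sub (hdT dq1 p))
    rw [h]; try ring
  have hVt11 : pdt (fun p' => -(2*I*lam^2) + I*(q p'*r p')) p
      = I * (pdt q p * r p + q p * pdt r p) := by
    have h : pdt (fun p' => -(2*I*lam^2) + I*(q p'*r p')) p = _ :=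
      pdt_eqd ((hasDerivAt_const _ _).add (((hdT dq0 p).mul (hdT dr0 p)).const_mul I))
    rw [h]; try ring
  -- entrywise y-derivative of W
  have hWy : mdy (Wmat q r lam) p =
      !![pdy (fun p' => -(4*I*lam^3) + 2*I*lam*(q p'*r p') + q p'*pdx r p' - pdx q p'*r p') p,
         pdy (fun p' =>
           -(4*I*lam^2)*r p' - 2*lam*pdx r p' + I*pdx (pdx r) p' + 2*I*(q p'*r p'*r p')) p;
         pdy (fun p' =>
           -(4*I*lam^2)*q p' + 2*lam*pdx q p' + I*pdx (pdx q) p' + 2*I*(q p'*q p'*r p')) p,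
         pdy (fun p' => 4*I*lam^3 - 2*I*lam*(q p'*r p') + pdx q p'*r p' - q p'*pdx r p') p] := by
    rw [hWfun]; exact mdy_entries _ _ _ _ p
  have hWy00 : pdy (fun p' =>
      -(4*I*lam^3) + 2*I*lam*(q p'*r p') + q p'*pdx r p' - pdx q p'*r p') p
      = 2*I*lam*(pdy q p*r p + q p*pdy r p) + pdy q p*pdx r p + q p*pdy (pdx r) p
        - pdy (pdx q) p*r p - pdx q p*pdy r p := by
    have h : pdy (fun p' =>
        -(4*I*lam^3) + 2*I*lam*(q p'*r p') + q p'*pdx r p' - pdx q p'*r p') p = _ :=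
      pdy_eqd ((((hasDerivAt_const _ _).add
        (((hdY dq0 p).mul (hdY dr0 p)).const_mul (2*I*lam))).add
        ((hdY dq0 p).mul (hdY dr1 p))).sub ((hdY dq1 p).mul (hdY dr0 p)))
    rw [h]; try ring
  have hWy01 : pdy (fun p' =>
      -(4*I*lam^2)*r p' - 2*lam*pdx r p' + I*pdx (pdx r) p' + 2*I*(q p'*r p'*r p')) p
      = -(4*I*lam^2)*pdy r p - 2*lam*pdy (pdx r) p + I*pdy (pdx (pdx r)) p
        + 2*I*(pdy q p*r p*r p) + 4*I*(q p*r p*pdy r p) := by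
    have h : pdy (fun p' =>
        -(4*I*lam^2)*r p' - 2*lam*pdx r p' + I*pdx (pdx r) p' + 2*I*(q p'*r p'*r p')) p = _ :=
      pdy_eqd (((((hdY dr0 p).const_mul (-(4*I*lam^2))).sub
        ((hdY dr1 p).const_mul (2*lam))).add ((hdY dr2 p).const_mul I)).add
        ((((hdY dq0 p).mul (hdY dr0 p)).mul (hdY dr0 p)).const_mul (2*I)))
    rw [h]; simp only [Pi.mul_apply, Prod.mk.eta]; try ring
  have hWy10 : pdy (fun p' =>
      -(4*I*lam^2)*q p' + 2*lam*pdx q p' + I*pdx (pdx q) p' + 2*I*(q p'*q p'*r p')) p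
      = -(4*I*lam^2)*pdy q p + 2*lam*pdy (pdx q) p + I*pdy (pdx (pdx q)) p
        + 4*I*(q p*pdy q p*r p) + 2*I*(q p*q p*pdy r p) := by
    have h : pdy (fun p' =>
        -(4*I*lam^2)*q p' + 2*lam*pdx q p' + I*pdx (pdx q) p' + 2*I*(q p'*q p'*r p')) p = _ :=
      pdy_eqd (((((hdY dq0 p).const_mul (-(4*I*lam^2))).add
        ((hdY dq1 p).const_mul (2*lam))).add ((hdY dq2 p).const_mul I)).add
        ((((hdY dq0 p).mul (hdY dq0 p)).mul (hdY dr0 p)).const_mul (2*I)))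
    rw [h]; simp only [Pi.mul_apply, Prod.mk.eta]; try ring
  have hWy11 : pdy (fun p' =>
      4*I*lam^3 - 2*I*lam*(q p'*r p') + pdx q p'*r p' - q p'*pdx r p') p
      = -(2*I*lam*(pdy q p*r p + q p*pdy r p)) + pdy (pdx q) p*r p + pdx q p*pdy r p
        - pdy q p*pdx r p - q p*pdy (pdx r) p := by
    have h : pdy (fun p' =>
        4*I*lam^3 - 2*I*lam*(q p'*r p') + pdx q p'*r p' - q p'*pdx r p') p = _ :=
      pdy_eqd ((((hasDerivAt_const _ _).sub
        (((hdY dq0 p).mul (hdY dr0 p)).const_mul (2*I*lam))).add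
        ((hdY dq1 p).mul (hdY dr0 p))).sub ((hdY dq0 p).mul (hdY dr1 p)))
    rw [h]; try ring
  -- assemble
  rw [hVt, hWy, Vmat_entries, Wmat_entries,
    hVt00, hVt01, hVt10, hVt11, hWy00, hWy01, hWy10, hWy11]
  ext i j
  fin_cases i <;> fin_cases j <;>
    · simp [Matrix.mul_apply, Fin.sum_univ_two, sub_eq_zero]
      try simp only [h3q p, h3r p, Etq1, Etr1, Eyq p, Eyr p, Eyq1 p, Eyr1 p, Eyq2, Eyr2]
      try ring_nf
      try simp only [Complex.I_sq]
      try ring_nf
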